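/- Strong distributivity is valid: for any unit vectors ψ ∈ ⊗^n ℂ², φ ∈ ⊗^m ℂ², χ ∈ ⊗^k ℂ², Prob(AND(ψ, OR(φ, χ))) ≤ Prob(OR(AND(ψ, φ), AND(ψ, χ))). -/

import Mathlib

open Complex Finset

noncomputable section

/-- The `n`-fold tensor power of `ℂ²`, identified with `EuclideanSpace ℂ (Fin (2^n))`. -/
abbrev QReg (n : ℕ) := EuclideanSpace ℂ (Fin (2 ^ n))

/-- Flip the last bit of a binary index. -/
def flipIdx {N : ℕ} (j : Fin N) : Fin N :=
  ⟨(j.val ^^^ 1) % N, Nat.mod_lt _ j.pos⟩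

/-- The gate `NOT⁽ⁿ⁾`: flips the last bit of each basis label, i.e. swaps the
coordinates `a_{2k}` and `a_{2k+1}`. -/
def NOTg (n : ℕ) (ψ : QReg n) : QReg n := WithLp.toLp 2 (fun j => ψ (flipIdx j))

/-- The gate `√NOT⁽ⁿ⁾`: replaces each coordinate pair `(a_{2k}, a_{2k+1})` by
`(½(1+i)a_{2k} + ½(1−i)a_{2k+1}, ½(1−i)a_{2k} + ½(1+i)a_{2k+1})`. -/
def sqNOTg (n : ℕ) (ψ : QReg n) : QReg n := WithLp.toLp 2 (fun j =>
  if j.val % 2 = 0 then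
    (1 + Complex.I) / 2 * ψ j + (1 - Complex.I) / 2 * ψ (flipIdx j)
  else
    (1 - Complex.I) / 2 * ψ (flipIdx j) + (1 + Complex.I) / 2 * ψ j)

/-- Action of the Toffoli gate `T⁽ⁿ'ᵐ'¹⁾` on basis indices: if the bits `xₙ`
(weight `2^(m+1)`) and `y_m` (weight `2`) are both `1`, flip the last bit `z`. -/
def toffIdx (n m : ℕ) (j : Fin (2 ^ (n + m + 1))) : Fin (2 ^ (n + m + 1)) :=
  if (j.val / 2 ^ (m + 1)) % 2 = 1 ∧ (j.val / 2) % 2 = 1 then flipIdx j else j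

/-- The Toffoli gate `T⁽ⁿ'ᵐ'¹⁾`. -/
def Tg (n m : ℕ) (ψ : QReg (n + m + 1)) : QReg (n + m + 1) := WithLp.toLp 2 (fun j => ψ (toffIdx n m j))

/-- Tensor product of coefficient vectors: `(ψ ⊗ φ)_{2^m·j + k} = ψ_j · φ_k`. -/
def tensor {n m : ℕ} (ψ : QReg n) (φ : QReg m) : QReg (n + m) := WithLp.toLp 2 (fun j : Fin (2 ^ (n + m)) =>
  ψ ⟨j.val / 2 ^ m, by
        have h : (j : ℕ) < 2 ^ n * 2 ^ m :=
          lt_of_lt_of_le j.isLt (le_of_eq (pow_add 2 n m))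
        exact (Nat.div_lt_iff_lt_mul (Nat.two_pow_pos m)).mpr h⟩ *
  φ ⟨j.val % 2 ^ m, Nat.mod_lt _ (Nat.two_pow_pos m)⟩)

/-- The bit `|0⟩ = e₀ ∈ ℂ²`. -/
def ket0 : QReg 1 := WithLp.toLp 2 (fun j : Fin (2 ^ 1) => if j.val = 0 then 1 else 0)

/-- `AND(ψ, φ) := T⁽ⁿ'ᵐ'¹⁾(ψ ⊗ φ ⊗ |0⟩)`. -/
def ANDg (n m : ℕ) (ψ : QReg n) (φ : QReg m) : QReg (n + m + 1) :=
  Tg n m (tensor (tensor ψ φ) ket0)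

/-- `OR(ψ, φ) := NOT(AND(NOT ψ, NOT φ))`. -/
def ORg (n m : ℕ) (ψ : QReg n) (φ : QReg m) : QReg (n + m + 1) :=
  NOTg (n + m + 1) (ANDg n m (NOTg n ψ) (NOTg m φ))

/-- The probability-value of a vector: the sum of `‖a_j‖²` over the odd indices `j`
(those whose basis label ends with the bit `1`). -/
def Prob {n : ℕ} (ψ : QReg n) : ℝ :=
  ∑ j ∈ Finset.univ.filter (fun j : Fin (2 ^ n) => j.val % 2 = 1), ‖ψ j‖ ^ 2

/-! All gates permute coordinates, so they preserve norms. `NOT` turns `Prob ψ` into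
`‖ψ‖² - Prob ψ`, and `AND` multiplies probabilities: the Toffoli gate moves the amplitude
`ψ_a φ_b` of `ψ ⊗ φ ⊗ |0⟩` to an odd index exactly when `a` and `b` are both odd. Writing
`p, q, r` for the probabilities of `ψ, φ, χ` and using `‖ψ‖ = 1`, the right-hand side minus the
left-hand side is `p q r (1 - p) ≥ 0`. -/

theorem Nat.xor_one_div_two (j : ℕ) : (j ^^^ 1) / 2 = j / 2 := by
  rcases Nat.even_or_odd j with h | h
  · rw [Nat.xor_one_of_even h]; rcases h with ⟨c, rfl⟩; omega
  · rw [Nat.xor_one_of_odd h]; rcases h with ⟨c, rfl⟩; omega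

theorem Nat.xor_one_lt_of_two_dvd {j N : ℕ} (hN : 2 ∣ N) (hj : j < N) : j ^^^ 1 < N := by
  rcases Nat.even_or_odd j with h | h
  · rw [Nat.xor_one_of_even h]; rcases h with ⟨c, rfl⟩; omega
  · rw [Nat.xor_one_of_odd h]; omega

section flipIdx

variable {N : ℕ}

theorem flipIdx_val (hN : 2 ∣ N) (j : Fin N) : (flipIdx j : ℕ) = j ^^^ 1 :=
  Nat.mod_eq_of_lt (Nat.xor_one_lt_of_two_dvd hN j.isLt)

theorem flipIdx_val_mod_two (hN : 2 ∣ N) (j : Fin N) : (flipIdx j : ℕ) % 2 = (j + 1) % 2 := by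
  rw [flipIdx_val hN, Nat.xor_mod_two_eq]

theorem flipIdx_val_div_two (hN : 2 ∣ N) (j : Fin N) : (flipIdx j : ℕ) / 2 = j / 2 := by
  rw [flipIdx_val hN, Nat.xor_one_div_two]

theorem flipIdx_val_div_two_mul (hN : 2 ∣ N) (j : Fin N) (d : ℕ) :
    (flipIdx j : ℕ) / (2 * d) = j / (2 * d) := by
  rw [← Nat.div_div_eq_div_mul, ← Nat.div_div_eq_div_mul, flipIdx_val_div_two hN]

theorem flipIdx_involutive (hN : 2 ∣ N) : Function.Involutive (flipIdx : Fin N → Fin N) :=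
  fun j => Fin.ext <| by rw [flipIdx_val hN, flipIdx_val hN, Nat.xor_assoc, Nat.xor_self, Nat.xor_zero]

end flipIdx

theorem EuclideanSpace.norm_toLp_comp_equiv {𝕜 ι : Type*} [RCLike 𝕜] [Fintype ι]
    (ψ : EuclideanSpace 𝕜 ι) (σ : ι ≃ ι) : ‖WithLp.toLp 2 (fun i => ψ (σ i))‖ = ‖ψ‖ :=
  (LinearIsometryEquiv.piLpCongrLeft 2 𝕜 𝕜 σ.symm).norm_map ψ

section Prob

variable {n : ℕ}

theorem Prob_nonneg (ψ : QReg n) : 0 ≤ Prob ψ :=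
  Finset.sum_nonneg fun _ _ => by positivity

theorem Prob_le_norm_sq (ψ : QReg n) : Prob ψ ≤ ‖ψ‖ ^ 2 := by
  rw [EuclideanSpace.norm_sq_eq]
  exact Finset.sum_le_univ_sum_of_nonneg fun _ => by positivity

theorem Prob_add_sum_even (ψ : QReg n) :
    Prob ψ + ∑ j ∈ univ.filter (fun j : Fin (2 ^ n) => ¬ j.val % 2 = 1), ‖ψ j‖ ^ 2 = ‖ψ‖ ^ 2 := by
  rw [EuclideanSpace.norm_sq_eq, Prob, Finset.sum_filter_add_sum_filter_not]

theorem norm_NOTg (hn : n ≠ 0) (ψ : QReg n) : ‖NOTg n ψ‖ = ‖ψ‖ :=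
  EuclideanSpace.norm_toLp_comp_equiv ψ (flipIdx_involutive (dvd_pow_self 2 hn)).toPerm

theorem Prob_NOTg (hn : n ≠ 0) (ψ : QReg n) : Prob (NOTg n ψ) = ‖ψ‖ ^ 2 - Prob ψ := by
  have h2 : 2 ∣ 2 ^ n := dvd_pow_self 2 hn
  rw [← Prob_add_sum_even ψ, add_sub_cancel_left, Prob]
  refine Finset.sum_equiv (flipIdx_involutive h2).toPerm (fun j => ?_) (fun j _ => rfl)
  simp only [Finset.mem_filter, Finset.mem_univ, true_and, Function.Involutive.coe_toPerm,
    flipIdx_val_mod_two h2]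
  omega

end Prob

def splitEquiv (n m : ℕ) : Fin (2 ^ n) × Fin (2 ^ m) ≃ Fin (2 ^ (n + m)) :=
  finProdFinEquiv.trans (finCongr (pow_add 2 n m).symm)

@[simp]
theorem splitEquiv_apply_val {n m : ℕ} (a : Fin (2 ^ n)) (b : Fin (2 ^ m)) :
    (splitEquiv n m (a, b) : ℕ) = b + 2 ^ m * a :=
  rfl

theorem splitEquiv_val_mod_two {N : ℕ} (c : Fin (2 ^ N)) (r : Fin (2 ^ 1)) :
    (splitEquiv N 1 (c, r) : ℕ) % 2 = r := by
  have := r.isLt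
  rw [splitEquiv_apply_val, pow_one] at *
  omega

theorem flipIdx_splitEquiv_one {N : ℕ} (c : Fin (2 ^ N)) :
    flipIdx (splitEquiv N 1 (c, 1)) = splitEquiv N 1 (c, 0) := by
  have hodd : Odd (1 + 2 * (c : ℕ)) := ⟨c, by ring⟩
  ext
  rw [flipIdx_val (dvd_pow_self 2 N.succ_ne_zero), splitEquiv_apply_val, splitEquiv_apply_val]
  simp [Nat.xor_one_of_odd hodd]

section tensor

variable {n m : ℕ}

theorem tensor_splitEquiv (u : QReg n) (v : QReg m) (a : Fin (2 ^ n)) (b : Fin (2 ^ m)) :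
    tensor u v (splitEquiv n m (a, b)) = u a * v b := by
  have hdiv : (b + 2 ^ m * a : ℕ) / 2 ^ m = a := by
    rw [Nat.add_mul_div_left _ _ (Nat.two_pow_pos m), Nat.div_eq_of_lt b.isLt, zero_add]
  have hmod : (b + 2 ^ m * a : ℕ) % 2 ^ m = b := by
    rw [Nat.add_mul_mod_self_left, Nat.mod_eq_of_lt b.isLt]
  simp only [tensor, splitEquiv_apply_val, hdiv, hmod]

theorem norm_tensor (u : QReg n) (v : QReg m) : ‖tensor u v‖ = ‖u‖ * ‖v‖ := by
  have hsq : ‖tensor u v‖ ^ 2 = (‖u‖ * ‖v‖) ^ 2 := by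
    rw [mul_pow, EuclideanSpace.norm_sq_eq, EuclideanSpace.norm_sq_eq, EuclideanSpace.norm_sq_eq,
      Finset.sum_mul_sum, ← Fintype.sum_prod_type', ← (splitEquiv n m).sum_comp]
    exact Fintype.sum_congr _ _ fun ⟨a, b⟩ => by rw [tensor_splitEquiv, norm_mul, mul_pow]
  exact (sq_eq_sq₀ (norm_nonneg _) (by positivity)).1 hsq

end tensor

theorem ket0_eq_single : ket0 = EuclideanSpace.single 0 1 := by
  ext j
  fin_cases j <;> simp [ket0]

theorem norm_ket0 : ‖ket0‖ = 1 := by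
  rw [ket0_eq_single, PiLp.norm_single, norm_one]

theorem toffIdx_involutive (n m : ℕ) : Function.Involutive (toffIdx n m) := by
  have h2 : 2 ∣ 2 ^ (n + m + 1) := dvd_pow_self 2 (Nat.succ_ne_zero _)
  have pow_succ_eq : (2 : ℕ) ^ (m + 1) = 2 * 2 ^ m := pow_succ' 2 m
  intro j
  by_cases hC : (j.val / 2 ^ (m + 1)) % 2 = 1 ∧ (j.val / 2) % 2 = 1
  · have hC' : ((flipIdx j).val / 2 ^ (m + 1)) % 2 = 1 ∧ ((flipIdx j).val / 2) % 2 = 1 := by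
      rwa [pow_succ_eq, flipIdx_val_div_two_mul h2, flipIdx_val_div_two h2, ← pow_succ_eq]
    simp only [toffIdx, if_pos hC, if_pos hC', flipIdx_involutive h2 j]
  · simp only [toffIdx, if_neg hC]

section Toffoli

variable {n m : ℕ}

theorem toffIdx_splitEquiv_one (hm : m ≠ 0) (a : Fin (2 ^ n)) (b : Fin (2 ^ m)) :
    toffIdx n m (splitEquiv (n + m) 1 (splitEquiv n m (a, b), 1)) =
      if a.val % 2 = 1 ∧ b.val % 2 = 1 then splitEquiv (n + m) 1 (splitEquiv n m (a, b), 0)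
      else splitEquiv (n + m) 1 (splitEquiv n m (a, b), 1) := by
  set j := splitEquiv (n + m) 1 (splitEquiv n m (a, b), 1)
  have hj : (j : ℕ) = 1 + 2 * (b + 2 ^ m * a) := by
    rw [splitEquiv_apply_val, splitEquiv_apply_val]; rfl
  have hj2 : (j : ℕ) / 2 = b + 2 ^ m * a := by omega
  have hja : (j : ℕ) / 2 ^ (m + 1) = a := by
    rw [show (2 : ℕ) ^ (m + 1) = 2 * 2 ^ m from pow_succ' 2 m, ← Nat.div_div_eq_div_mul, hj2,
      Nat.add_mul_div_left _ _ (Nat.two_pow_pos m), Nat.div_eq_of_lt b.isLt, zero_add]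
  have hjb : (j : ℕ) / 2 % 2 = b % 2 := by
    have : 2 ∣ 2 ^ m * (a : ℕ) := (dvd_pow_self 2 hm).mul_right _
    omega
  simp only [toffIdx, hja, hjb, flipIdx_splitEquiv_one, j]

theorem norm_Tg (ψ : QReg (n + m + 1)) : ‖Tg n m ψ‖ = ‖ψ‖ :=
  EuclideanSpace.norm_toLp_comp_equiv ψ (toffIdx_involutive n m).toPerm

end Toffoli

theorem Prob_eq_sum_splitEquiv_one {N : ℕ} (w : QReg (N + 1)) :
    Prob w = ∑ c, ‖w (splitEquiv N 1 (c, 1))‖ ^ 2 := by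
  rw [Prob, Finset.sum_filter, ← (splitEquiv N 1).sum_comp, Fintype.sum_prod_type]
  refine Fintype.sum_congr _ _ fun c => ?_
  rw [Fintype.sum_eq_single 1 fun r hr => ?_, splitEquiv_val_mod_two]
  · exact if_pos rfl
  · rw [splitEquiv_val_mod_two]
    exact if_neg fun h => hr (Fin.ext (h.trans rfl))

section AND

variable {n m : ℕ}

theorem norm_ANDg (u : QReg n) (v : QReg m) : ‖ANDg n m u v‖ = ‖u‖ * ‖v‖ := by
  rw [ANDg, norm_Tg, norm_tensor, norm_tensor, norm_ket0, mul_one]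

theorem ANDg_splitEquiv_one (hm : m ≠ 0) (u : QReg n) (v : QReg m) (a : Fin (2 ^ n))
    (b : Fin (2 ^ m)) :
    ANDg n m u v (splitEquiv (n + m) 1 (splitEquiv n m (a, b), 1)) =
      if a.val % 2 = 1 ∧ b.val % 2 = 1 then u a * v b else 0 := by
  simp only [ANDg, Tg, toffIdx_splitEquiv_one hm]
  split_ifs <;> rw [tensor_splitEquiv, tensor_splitEquiv] <;> simp [ket0]

theorem Prob_ANDg (hm : m ≠ 0) (u : QReg n) (v : QReg m) :
    Prob (ANDg n m u v) = Prob u * Prob v := by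
  rw [Prob_eq_sum_splitEquiv_one, ← (splitEquiv n m).sum_comp, Fintype.sum_prod_type, Prob, Prob,
    Finset.sum_filter, Finset.sum_filter, Finset.sum_mul_sum]
  refine Fintype.sum_congr _ _ fun a => Fintype.sum_congr _ _ fun b => ?_
  rw [ANDg_splitEquiv_one hm]
  split_ifs <;> simp_all [mul_pow]

end AND

theorem Prob_ORg {n m : ℕ} (hn : n ≠ 0) (hm : m ≠ 0) (u : QReg n) (v : QReg m) :
    Prob (ORg n m u v) = ‖u‖ ^ 2 * ‖v‖ ^ 2 - (‖u‖ ^ 2 - Prob u) * (‖v‖ ^ 2 - Prob v) := by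
  rw [ORg, Prob_NOTg (Nat.succ_ne_zero _), norm_ANDg, Prob_ANDg hm, Prob_NOTg hn, Prob_NOTg hm,
    norm_NOTg hn, norm_NOTg hm, mul_pow]

theorem stmt17_general (n m k : ℕ) (hm : 1 ≤ m) (hk : 1 ≤ k)
    (ψ : QReg n) (φ : QReg m) (χ : QReg k)
    (hψ : ‖ψ‖ = 1) :
    Prob (ANDg n (m + k + 1) ψ (ORg m k φ χ)) ≤
      Prob (ORg (n + m + 1) (n + k + 1) (ANDg n m ψ φ) (ANDg n k ψ χ)) := by
  have hm₀ : m ≠ 0 := Nat.one_le_iff_ne_zero.mp hm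
  have hk₀ : k ≠ 0 := Nat.one_le_iff_ne_zero.mp hk
  have hp : Prob ψ ≤ 1 := by simpa [hψ] using Prob_le_norm_sq ψ
  rw [Prob_ANDg (Nat.succ_ne_zero _), Prob_ORg hm₀ hk₀, Prob_ORg (Nat.succ_ne_zero _)
    (Nat.succ_ne_zero _), Prob_ANDg hm₀, Prob_ANDg hk₀, norm_ANDg, norm_ANDg, hψ, one_mul, one_mul]
  have hpqr : 0 ≤ Prob ψ * Prob φ * Prob χ * (1 - Prob ψ) :=
    mul_nonneg (mul_nonneg (mul_nonneg (Prob_nonneg ψ) (Prob_nonneg φ)) (Prob_nonneg χ))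
      (sub_nonneg.2 hp)
  linear_combination hpqr

theorem stmt17 (n m k : ℕ) (hn : 1 ≤ n) (hm : 1 ≤ m) (hk : 1 ≤ k)
    (ψ : QReg n) (φ : QReg m) (χ : QReg k)
    (hψ : ‖ψ‖ = 1) (hφ : ‖φ‖ = 1) (hχ : ‖χ‖ = 1) :
    Prob (ANDg n (m + k + 1) ψ (ORg m k φ χ)) ≤
      Prob (ORg (n + m + 1) (n + k + 1) (ANDg n m ψ φ) (ANDg n k ψ χ)) :=
  stmt17_general n m k hm hk ψ φ χ hψ

end
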